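/- Let C be the cluster category of a hereditary algebra H, T̄ an almost complete tilting object with the two complements M and M*, T = T̄ ⊕ M, and Γ = End_C(T)^op. Then the Γ-module Hom_C(T, τM*) is simple, and it is isomorphic to the simple top S_M of the indecomposable projective Γ-module Hom_C(T, M). -/

import Mathlib

open CategoryTheory Limits Pretriangulated Opposite

universe v u

/-- `X ∈ add T`: `X` is a direct summand of a finite direct sum of copies of `T`. -/
def memAddC {C : Type u} [Category.{v} C] [Preadditive C] [HasFiniteBiproducts C]
    (T X : C) : Prop :=
  ∃ (n : ℕ) (i : X ⟶ ⨁ (fun _ : Fin n => T)) (p : ⨁ (fun _ : Fin n => T) ⟶ X),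
    i ≫ p = 𝟙 X

/-- `T` is a tilting object: `Hom_C(T, X[1]) = 0` if and only if `X ∈ add T`. -/
def IsTiltingObject {C : Type u} [Category.{v} C] [Preadditive C] [HasFiniteBiproducts C]
    [HasShift C ℤ] (T : C) : Prop :=
  ∀ X : C, (∀ f : T ⟶ X⟦(1 : ℤ)⟧, f = 0) ↔ memAddC T X

/-- An object of an additive category is indecomposable if it is nonzero and its only
idempotent endomorphisms are `0` and the identity. -/
def IndecC {C : Type u} [Category.{v} C] [Preadditive C] [HasZeroObject C] (X : C) : Prop :=
  (¬ IsZero X) ∧ ∀ e : X ⟶ X, e ≫ e = e → e = 0 ∨ e = 𝟙 X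

/-- The `End X`-module structure on `unop X ⟶ Y` for `X : Cᵒᵖ` (the former Mathlib
instance `moduleEndLeft`), restored with its old meaning. -/
instance moduleEndLeftOpOld {C : Type u} [Category.{v} C] [Preadditive C] {X : Cᵒᵖ} {Y : C} :
    Module (End X) (unop X ⟶ Y) where
  smul r f := r.unop ≫ f
  one_smul _ := Category.id_comp _
  mul_smul _ _ _ := Category.assoc _ _ _
  smul_add _ _ _ := Preadditive.comp_add _ _ _ _ _ _
  smul_zero _ := Limits.comp_zero
  add_smul _ _ _ := Preadditive.add_comp _ _ _ _ _ _
  zero_smul _ := Limits.zero_comp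

/-- The former Mathlib `preadditiveCoyonedaObj` (for `X : Cᵒᵖ`), restored with its old meaning. -/
def preadditiveCoyonedaObjOld {C : Type u} [Category.{v} C] [Preadditive C] (X : Cᵒᵖ) :
    C ⥤ ModuleCat.{v} (End X) where
  obj Y := ModuleCat.of _ (unop X ⟶ Y)
  map f := ModuleCat.ofHom
    { toFun := fun g => g ≫ f
      map_add' := fun _ _ => Preadditive.add_comp _ _ _ _ _ _
      map_smul' := fun _ _ => Category.assoc _ _ _ }

/-! Since `T̄ ⊕ M*` is tilting, `Hom(T̄, M*[1]) = 0`. Hence a morphism `T̄ ⊕ M ⟶ M*[1]` is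
determined by its restriction to `M`, and `End(T̄ ⊕ M)` acts on `Hom(T̄ ⊕ M, M*[1])` through
`End(M)`; so this module is simple because `Hom(M, M*[1])` is, and `Hom(T, τM*)` is simple as
`τ ≅ [1]`. The connecting morphism `c : M ⟶ M*[1]` is nonzero: otherwise `M` would be a summand
of `B ∈ add T̄`, forcing `Hom(M, M*[1]) = 0`. Postcomposition with `c` is therefore a nonzero map
from `Hom(T, M)` to a simple module, hence onto. -/

section AdditiveClosure

variable {C : Type u} [Category.{v} C] [Preadditive C] [HasFiniteBiproducts C]

lemma memAddC_biprod_right (T X : C) [HasBinaryBiproduct T X] : memAddC (T ⊞ X) X :=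
  ⟨1, biproduct.lift fun _ => biprod.inr, biproduct.desc fun _ => biprod.snd, by
    rw [biproduct.lift_desc]; simp⟩

lemma memAddC.hom_eq_zero {T X Z : C} (hX : memAddC T X) (hT : ∀ f : T ⟶ Z, f = 0)
    (f : X ⟶ Z) : f = 0 := by
  obtain ⟨n, i, p, hip⟩ := hX
  have hp : p ≫ f = 0 := biproduct.hom_ext' _ _ fun _ => by simp [hT]
  rw [← Category.id_comp f, ← hip, Category.assoc, hp, comp_zero]

lemma IsTiltingObject.left_hom_shift_eq_zero [HasShift C ℤ] {T X : C} [HasBinaryBiproduct T X]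
    (h : IsTiltingObject (T ⊞ X)) (f : T ⟶ X⟦(1 : ℤ)⟧) : f = 0 := by
  simpa using congrArg (biprod.inl ≫ ·) ((h X).2 (memAddC_biprod_right T X) (biprod.fst ≫ f))

end AdditiveClosure

section CoyonedaBiprod

variable {C : Type u} [Category.{v} C] [Preadditive C]

lemma biprod_hom_eq_snd_comp_inr_comp {X Y Z : C} [HasBinaryBiproduct X Y]
    (hX : ∀ f : X ⟶ Z, f = 0) (f : X ⊞ Y ⟶ Z) : f = biprod.snd ≫ biprod.inr ≫ f :=
  biprod.hom_ext' _ _ (by simp [hX]) (by simp)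

lemma isSimpleModule_coyoneda_iff {Y Z : C} :
    IsSimpleModule (End (op Y)) ((preadditiveCoyonedaObjOld (op Y)).obj Z) ↔
      (∃ x : Y ⟶ Z, x ≠ 0) ∧ ∀ x : Y ⟶ Z, x ≠ 0 → ∀ y : Y ⟶ Z, ∃ e : End (op Y), e.unop ≫ x = y :=
  isSimpleModule_iff_toSpanSingleton_surjective.trans
    (and_congr (nontrivial_iff_exists_ne 0) Iff.rfl)

lemma isSimpleModule_coyoneda_biprod {X Y Z : C} [HasBinaryBiproduct X Y]
    (hX : ∀ f : X ⟶ Z, f = 0)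
    (hY : IsSimpleModule (End (op Y)) ((preadditiveCoyonedaObjOld (op Y)).obj Z)) :
    IsSimpleModule (End (op (X ⊞ Y))) ((preadditiveCoyonedaObjOld (op (X ⊞ Y))).obj Z) := by
  obtain ⟨⟨g, hg⟩, hgen⟩ := isSimpleModule_coyoneda_iff.mp hY
  refine isSimpleModule_coyoneda_iff.mpr ⟨⟨biprod.snd ≫ g, fun h => hg ?_⟩, fun x hx y => ?_⟩
  · simpa using congrArg (biprod.inr ≫ ·) h
  have hx' : biprod.inr ≫ x ≠ 0 := fun h =>
    hx (by rw [biprod_hom_eq_snd_comp_inr_comp hX x, h, comp_zero])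
  obtain ⟨e, he⟩ := hgen _ hx' (biprod.inr ≫ y)
  refine ⟨(biprod.snd ≫ e.unop ≫ biprod.inr).op, ?_⟩
  rw [biprod_hom_eq_snd_comp_inr_comp hX y, ← he]
  simp

end CoyonedaBiprod

namespace CategoryTheory.Pretriangulated

variable {C : Type u} [Category.{v} C] [Preadditive C] [HasZeroObject C] [HasShift C ℤ]
  [∀ n : ℤ, (CategoryTheory.shiftFunctor C n).Additive] [Pretriangulated C]

lemma Triangle.eq_zero_of_mor₃_eq_zero {T : Triangle C} (hT : T ∈ distTriang C)
    (h₃ : T.mor₃ = 0) {Z : C} (h₂ : ∀ f : T.obj₂ ⟶ Z, f = 0) (f : T.obj₃ ⟶ Z) : f = 0 := by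
  obtain ⟨s, hs⟩ := Triangle.coyoneda_exact₃ _ hT (𝟙 _) (by simp [h₃])
  rw [← Category.id_comp f, hs, Category.assoc, h₂ (T.mor₂ ≫ f), comp_zero]

end CategoryTheory.Pretriangulated

/-- Let `C` be the cluster category of a hereditary algebra, `T̄` an almost complete tilting
object with the two complements `M` and `M*`, `T = T̄ ⊕ M` and `Γ = End_C(T)ᵒᵖ`.  There is a
triangle `M* → B → M → M*[1]` with `B → M` a minimal right `add T̄`-approximation, and
`Hom_C(M, M*[1])` is one-dimensional over `End_C(M)/Rad(M,M)`, i.e. a simple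
`End_C(M)`-module.  Then the `Γ`-module `Hom_C(T, τM*)` is simple, and it is isomorphic to the
simple top `S_M` of the indecomposable projective `Γ`-module `Hom_C(T, M)` (equivalently, it is
a simple quotient of `Hom_C(T, M)`). -/
theorem stmt13 {C : Type u} [Category.{v} C] [Preadditive C] [HasZeroObject C]
    [HasShift C ℤ] [∀ n : ℤ, (shiftFunctor C n).Additive] [Pretriangulated C]
    [HasFiniteBiproducts C]
    (τ : C ⥤ C) [τ.Additive] [τ.IsEquivalence] (hτ : τ ≅ shiftFunctor C (1 : ℤ))
    (Tbar M Mstar : C) (hM : IndecC M) (hMstar : IndecC Mstar)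
    (hMM : ¬ Nonempty (M ≅ Mstar))
    (hT : IsTiltingObject (Tbar ⊞ M)) (hT' : IsTiltingObject (Tbar ⊞ Mstar))
    -- the triangle `M* → B → M → M*[1]`, with `B → M` a minimal right `add T̄`-approximation
    (B : C) (hB : memAddC Tbar B)
    (a : Mstar ⟶ B) (b : B ⟶ M) (c : M ⟶ Mstar⟦(1 : ℤ)⟧)
    (htri : Triangle.mk a b c ∈ distTriang C)
    (happrox : ∀ (Z : C), memAddC Tbar Z → ∀ g : Z ⟶ M, ∃ u : Z ⟶ B, u ≫ b = g)
    (hmin : ∀ e : B ⟶ B, e ≫ b = b → IsIso e)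
    -- `Hom_C(M, M*[1])` is one-dimensional over `End_C(M)/Rad(M,M)`, hence simple
    (hone : IsSimpleModule (End (op M))
      ((preadditiveCoyonedaObjOld (op M)).obj (Mstar⟦(1 : ℤ)⟧)))
    (G : C ⥤ ModuleCat.{v} (End (op (Tbar ⊞ M))))
    (hG : G = preadditiveCoyonedaObjOld (op (Tbar ⊞ M))) :
    IsSimpleModule (End (op (Tbar ⊞ M))) (G.obj (τ.obj Mstar)) ∧
    ∃ π : G.obj M ⟶ G.obj (τ.obj Mstar), Function.Surjective π := by
  subst hG
  have hTbar : ∀ f : Tbar ⟶ Mstar⟦(1 : ℤ)⟧, f = 0 := hT'.left_hom_shift_eq_zero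
  obtain ⟨f, hf⟩ := (isSimpleModule_coyoneda_iff.mp hone).1
  have hc : c ≠ 0 := fun hc =>
    hf (Triangle.eq_zero_of_mor₃_eq_zero htri hc (hB.hom_eq_zero hTbar) f)
  have := isSimpleModule_coyoneda_biprod hTbar hone
  let e := (preadditiveCoyonedaObjOld (op (Tbar ⊞ M))).mapIso (hτ.app Mstar)
  have hsimple : IsSimpleModule (End (op (Tbar ⊞ M)))
      ((preadditiveCoyonedaObjOld (op (Tbar ⊞ M))).obj (τ.obj Mstar)) :=
    IsSimpleModule.congr e.toLinearEquiv
  refine ⟨hsimple, (preadditiveCoyonedaObjOld (op (Tbar ⊞ M))).map c ≫ e.inv,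
    LinearMap.surjective_of_ne_zero fun h => hc ?_⟩
  have hsnd := LinearMap.congr_fun h (biprod.snd : Tbar ⊞ M ⟶ M)
  change (biprod.snd ≫ c) ≫ (hτ.app Mstar).inv = 0 at hsnd
  simpa using congrArg (biprod.inr ≫ · ≫ (hτ.app Mstar).hom) hsnd
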